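/- Consider the closed-loop system: x̃ : [0,∞) → ℝⁿ and x̃_c : [0,∞) → ℝ^{nG} are differentiable and satisfy x̃'(t) = (J − R̃(x̃(t)))·Q·x̃(t) + g·ũ(t) and x̃_c'(t) = −k_I·𝓛·ũ_c(t), where ỹ = gᵀQx̃, ỹ_c = −𝓛x̃_c, ũ = −rỹ − w⁻¹ỹ_c, ũ_c = (w⁻¹)ᵀỹ, with 𝓛 symmetric and w invertible, and suppose R̃ ∘ x̃ is continuous and bounded on [0,∞). If there exists ε > 0 such that vᵀ·(R̃(x̃(t)) + g·r·gᵀ)·v ≥ ε‖v‖² for every t ≥ 0 and every v ∈ ℝⁿ, then x̃(t) → 0 as t → ∞. -/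

import Mathlib

/-!
Along the closed loop the storage `H = ½ x̃ᵀQx̃ + ½ x̃_cᵀ k_I⁻¹ x̃_c` has derivative
`-(Qx̃)ᵀ(R̃ + g r gᵀ)(Qx̃) ≤ -ε‖Qx̃‖²`: the skew part `J` and the integral action through `w`
and `𝓛` exchange energy without loss. So `H` is nonincreasing and bounded below, hence convergent,
and `(x̃, x̃_c)` stays in a compact sublevel set of `H`. Since `R̃` is bounded there, `x̃` has
bounded velocity and `Qx̃` is uniformly continuous. If `‖Qx̃(t)‖ ≥ η` for arbitrarily large `t`,
uniform continuity keeps `‖Qx̃‖ ≥ η / 2` on a window of fixed length after each such `t`, so `H`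
drops by a fixed amount there, contradicting convergence of `H` (Barbalat's argument).
Thus `Qx̃ → 0`, and `x̃ → 0` because `Q` is invertible.
-/

open Matrix

/-- Index type of the microgrid state: generator currents, line currents, bus charges. -/
abbrev BIdx (nG nE nN : ℕ) := Fin nG ⊕ (Fin nE ⊕ Fin nN)

/-- The input matrix `g = [I; 0; 0]`. -/
noncomputable def gMat (nG nE nN : ℕ) : Matrix (BIdx nG nE nN) (Fin nG) ℝ :=
  Matrix.of fun i j =>
    match i with
    | Sum.inl i' => if i' = j then (1 : ℝ) else 0
    | Sum.inr _ => 0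

open Filter Topology Set

section MatrixForms

variable {ι κ : Type*} [Fintype ι] [Fintype κ]

theorem mulVec_dotProduct_eq_dotProduct_transpose_mulVec (A : Matrix ι κ ℝ) (x : κ → ℝ)
    (z : ι → ℝ) : (A *ᵥ x) ⬝ᵥ z = x ⬝ᵥ (Aᵀ *ᵥ z) := by
  rw [dotProduct_transpose_mulVec, dotProduct_comm]

theorem dotProduct_mulVec_self_eq_zero_of_transpose_eq_neg {J : Matrix ι ι ℝ} (hJ : Jᵀ = -J)
    (v : ι → ℝ) : v ⬝ᵥ (J *ᵥ v) = 0 := by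
  have h := dotProduct_transpose_mulVec J v v
  rw [hJ, neg_mulVec, dotProduct_neg] at h
  linarith

theorem hasDerivAt_dotProduct_mulVec (M : Matrix ι κ ℝ) {a : ℝ → ι → ℝ} {b : ℝ → κ → ℝ}
    {a' : ι → ℝ} {b' : κ → ℝ} {t : ℝ} (ha : HasDerivAt a a' t) (hb : HasDerivAt b b' t) :
    HasDerivAt (fun s => a s ⬝ᵥ (M *ᵥ b s)) (a' ⬝ᵥ (M *ᵥ b t) + a t ⬝ᵥ (M *ᵥ b')) t := by
  have := HasDerivAt.fun_sum (u := Finset.univ) fun i _ =>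
    (hasDerivAt_pi.1 ha i).fun_mul (HasDerivAt.fun_sum (u := Finset.univ) fun j _ =>
      (hasDerivAt_pi.1 hb j).const_mul (M i j))
  simpa only [dotProduct, mulVec, Finset.sum_add_distrib] using this

theorem hasDerivAt_dotProduct_mulVec_self {M : Matrix ι ι ℝ} (hM : M.IsSymm) {x : ℝ → ι → ℝ}
    {x' : ι → ℝ} {t : ℝ} (hx : HasDerivAt x x' t) :
    HasDerivAt (fun s => x s ⬝ᵥ (M *ᵥ x s)) (2 * (x' ⬝ᵥ (M *ᵥ x t))) t := by
  convert hasDerivAt_dotProduct_mulVec M hx hx using 1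
  rw [two_mul, ← dotProduct_transpose_mulVec, hM.eq]

theorem Matrix.PosDef.exists_pos_mul_norm_sq_le {Q : Matrix ι ι ℝ} (hQ : Q.PosDef) :
    ∃ μ > 0, ∀ z, μ * ‖z‖ ^ 2 ≤ z ⬝ᵥ (Q *ᵥ z) := by
  rcases isEmpty_or_nonempty ι with hι | hι
  · exact ⟨1, one_pos, fun z => by simp [Subsingleton.elim z 0]⟩
  -- `μ` is the minimum of the quadratic form on the unit sphere
  obtain ⟨u, hu, hmin⟩ := (isCompact_sphere (0 : ι → ℝ) 1).exists_isMinOn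
    (NormedSpace.sphere_nonempty.2 zero_le_one) (by fun_prop : Continuous fun z : ι → ℝ =>
      z ⬝ᵥ (Q *ᵥ z)).continuousOn
  have hu0 : u ≠ 0 := ne_zero_of_mem_unit_sphere ⟨u, hu⟩
  refine ⟨_, by simpa using hQ.dotProduct_mulVec_pos hu0, fun z => ?_⟩
  rcases eq_or_ne z 0 with rfl | hz
  · simp
  have hzu : ‖z‖⁻¹ • z ∈ Metric.sphere (0 : ι → ℝ) 1 := by simp [norm_smul, hz]
  have := isMinOn_iff.1 hmin _ hzu
  simp only [mulVec_smul, dotProduct_smul, smul_dotProduct, smul_eq_mul] at this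
  have hn : 0 < ‖z‖ := norm_pos_iff.2 hz
  calc u ⬝ᵥ (Q *ᵥ u) * ‖z‖ ^ 2 ≤ ‖z‖⁻¹ * (‖z‖⁻¹ * z ⬝ᵥ (Q *ᵥ z)) * ‖z‖ ^ 2 := by gcongr
    _ = z ⬝ᵥ (Q *ᵥ z) := by field_simp

theorem Matrix.PosDef.isCompact_setOf_dotProduct_mulVec_le {Q : Matrix ι ι ℝ} (hQ : Q.PosDef)
    (c : ℝ) : IsCompact {z | z ⬝ᵥ (Q *ᵥ z) ≤ c} := by
  obtain ⟨μ, hμ, hQμ⟩ := hQ.exists_pos_mul_norm_sq_le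
  refine Metric.isCompact_of_isClosed_isBounded (isClosed_le (by fun_prop) continuous_const) ?_
  refine (Metric.isBounded_closedBall (x := 0) (r := √(c / μ))).subset fun z hz => ?_
  rw [mem_closedBall_zero_iff]
  refine Real.le_sqrt_of_sq_le ?_
  rw [le_div_iff₀ hμ, mul_comm]
  exact (hQμ z).trans hz

theorem tendsto_zero_of_tendsto_mulVec_zero [DecidableEq ι] {α : Type*} {l : Filter α}
    {A : Matrix ι ι ℝ} (hA : IsUnit A.det) {x : α → ι → ℝ}
    (h : Tendsto (fun s => A *ᵥ x s) l (𝓝 0)) : Tendsto x l (𝓝 0) := by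
  have hx : ∀ s, A⁻¹ *ᵥ (A *ᵥ x s) = x s := fun s => by
    rw [mulVec_mulVec, nonsing_inv_mul _ hA, one_mulVec]
  simpa only [Function.comp_def, id, hx, mulVec_zero] using
    (((continuous_const (y := A⁻¹)).matrix_mulVec continuous_id).tendsto 0).comp h

end MatrixForms

theorem antitoneOn_Ici_of_hasDerivAt_nonpos {V V' : ℝ → ℝ} {a : ℝ}
    (hV : ∀ t, a ≤ t → HasDerivAt V (V' t) t) (hV' : ∀ t, a ≤ t → V' t ≤ 0) :
    AntitoneOn V (Ici a) :=
  antitoneOn_of_hasDerivWithinAt_nonpos (convex_Ici a)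
    (fun t ht => (hV t ht).continuousAt.continuousWithinAt)
    (fun t ht => (hV t (interior_subset ht)).hasDerivWithinAt)
    (fun t ht => hV' t (interior_subset ht))

theorem exists_tendsto_atTop_of_antitoneOn_Ici {V : ℝ → ℝ} {a : ℝ} (hV : AntitoneOn V (Ici 0))
    (hVa : ∀ t, 0 ≤ t → a ≤ V t) : ∃ l, Tendsto V atTop (𝓝 l) := by
  have hW : Antitone fun t => V (max t 0) := fun s t hst =>
    hV (le_max_right s 0) (le_max_right t 0) (max_le_max_right 0 hst)
  refine ⟨_, (tendsto_atTop_ciInf hW ⟨a, ?_⟩).congr' ?_⟩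
  · rintro _ ⟨t, rfl⟩
    exact hVa _ (le_max_right t 0)
  · filter_upwards [eventually_ge_atTop 0] with t ht
    rw [max_eq_left ht]

theorem uniformContinuousOn_Ici_of_hasDerivAt_comp {X E : Type*} [TopologicalSpace X]
    [NormedAddCommGroup E] [NormedSpace ℝ E] {x : ℝ → E} {p : ℝ → X} {F : X → E} {S : Set X}
    (hS : IsCompact S) (hF : ContinuousOn F S) (hpS : ∀ t, 0 ≤ t → p t ∈ S)
    (hx : ∀ t, 0 ≤ t → HasDerivAt x (F (p t)) t) : UniformContinuousOn x (Ici 0) := by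
  obtain ⟨B, hB⟩ := hS.exists_bound_of_continuousOn hF
  exact ((convex_Ici 0).lipschitzOnWith_of_nnnorm_hasDerivWithin_le (C := B.toNNReal)
    (fun t ht => (hx t ht).hasDerivWithinAt)
    fun t ht => by
      rw [← norm_toNNReal]
      exact Real.toNNReal_le_toNNReal (hB _ (hpS t ht))).uniformContinuousOn

theorem tendsto_zero_of_hasDerivAt_le_neg_mul_norm_sq {E : Type*} [SeminormedAddCommGroup E]
    {V V' : ℝ → ℝ} {y : ℝ → E} {ε a : ℝ} (hε : 0 < ε)
    (hV : ∀ t, 0 ≤ t → HasDerivAt V (V' t) t) (hV' : ∀ t, 0 ≤ t → V' t ≤ -(ε * ‖y t‖ ^ 2))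
    (hVa : ∀ t, 0 ≤ t → a ≤ V t) (hy : UniformContinuousOn y (Ici 0)) :
    Tendsto y atTop (𝓝 0) := by
  obtain ⟨l, hl⟩ := exists_tendsto_atTop_of_antitoneOn_Ici
    (antitoneOn_Ici_of_hasDerivAt_nonpos hV fun t ht =>
      (hV' t ht).trans (neg_nonpos.2 (by positivity))) hVa
  rw [Metric.tendsto_atTop]
  intro η hη
  obtain ⟨δ, hδ, hyδ⟩ := Metric.uniformContinuousOn_iff.1 hy (η / 2) (half_pos hη)
  have hdrop : Tendsto (fun t => V t - V (t + δ)) atTop (𝓝 0) := by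
    simpa using hl.sub (hl.comp (tendsto_atTop_add_const_right _ δ tendsto_id))
  obtain ⟨T, hT⟩ := Metric.tendsto_atTop.1 hdrop (ε * (η / 2) ^ 2 * δ) (by positivity)
  refine ⟨max T 0, fun t ht => ?_⟩
  have ht0 : 0 ≤ t := le_of_max_le_right ht
  rw [dist_zero_right]
  by_contra! hyt
  have hslope : V (t + δ) - V t ≤ -(ε * (η / 2) ^ 2) * (t + δ - t) := by
    refine (convex_Icc t (t + δ)).image_sub_le_mul_sub_of_deriv_le
      (fun τ hτ => (hV τ (ht0.trans hτ.1)).continuousAt.continuousWithinAt)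
      (fun τ hτ => ?_) (fun τ hτ => ?_) t ⟨le_rfl, by linarith⟩ (t + δ) ⟨by linarith, le_rfl⟩
      (by linarith)
    all_goals rw [interior_Icc] at hτ
    · exact (hV τ (ht0.trans hτ.1.le)).differentiableAt.differentiableWithinAt
    rw [(hV τ (ht0.trans hτ.1.le)).deriv]
    have hclose : dist (y τ) (y t) < η / 2 := hyδ τ (ht0.trans hτ.1.le) t ht0 (by
      rw [Real.dist_eq, abs_lt]; constructor <;> linarith [hτ.1, hτ.2])
    have hyτ : η / 2 ≤ ‖y τ‖ := by
      linarith [norm_sub_norm_le (y t) (y τ), dist_eq_norm (y τ) (y t), norm_sub_rev (y τ) (y t)]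
    nlinarith [hV' τ (ht0.trans hτ.1.le), pow_le_pow_left₀ (by positivity) hyτ 2]
  have := hT t (le_of_max_le_left ht)
  rw [Real.dist_eq, sub_zero] at this
  linarith [le_abs_self (V t - V (t + δ))]

section ClosedLoop

variable {ι κ : Type*} [Fintype ι] [Fintype κ] [DecidableEq κ]

noncomputable def closedLoopStorage (Q : Matrix ι ι ℝ) (K : Matrix κ κ ℝ) (x : ι → ℝ)
    (c : κ → ℝ) : ℝ :=
  (x ⬝ᵥ (Q *ᵥ x) + c ⬝ᵥ (K⁻¹ *ᵥ c)) / 2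

theorem closedLoopStorage_nonneg {Q : Matrix ι ι ℝ} {K : Matrix κ κ ℝ} (hQ : Q.PosDef)
    (hK : K.PosDef) (x : ι → ℝ) (c : κ → ℝ) : 0 ≤ closedLoopStorage Q K x c := by
  have hx := hQ.posSemidef.dotProduct_mulVec_nonneg x
  have hc := hK.inv.posSemidef.dotProduct_mulVec_nonneg c
  simp only [star_trivial] at hx hc
  unfold closedLoopStorage
  positivity

theorem isCompact_setOf_closedLoopStorage_le {Q : Matrix ι ι ℝ} {K : Matrix κ κ ℝ}
    (hQ : Q.PosDef) (hK : K.PosDef) (a : ℝ) :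
    IsCompact {p : (ι → ℝ) × (κ → ℝ) | closedLoopStorage Q K p.1 p.2 ≤ a} := by
  refine ((hQ.isCompact_setOf_dotProduct_mulVec_le (2 * a)).prod
    (hK.inv.isCompact_setOf_dotProduct_mulVec_le (2 * a))).of_isClosed_subset
    (isClosed_le (by unfold closedLoopStorage; fun_prop) continuous_const) fun p hp => ?_
  have hx := hQ.posSemidef.dotProduct_mulVec_nonneg p.1
  have hc := hK.inv.posSemidef.dotProduct_mulVec_nonneg p.2
  simp only [star_trivial] at hx hc
  change closedLoopStorage Q K p.1 p.2 ≤ a at hp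
  unfold closedLoopStorage at hp
  constructor <;> show (_ : ℝ) ≤ _ <;> linarith

theorem closedLoop_power_balance {R J : Matrix ι ι ℝ} {g : Matrix ι κ ℝ}
    {r W L K : Matrix κ κ ℝ} (hJ : Jᵀ = -J) (hL : L.IsSymm) (hK : K.IsSymm) (hKinv : K * K⁻¹ = 1)
    (v : ι → ℝ) (c : κ → ℝ) :
    ((J - R) *ᵥ v + g *ᵥ (-(r *ᵥ (gᵀ *ᵥ v)) - W *ᵥ (-(L *ᵥ c)))) ⬝ᵥ v
      + (-((K * L) *ᵥ (Wᵀ *ᵥ (gᵀ *ᵥ v)))) ⬝ᵥ (K⁻¹ *ᵥ c)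
      = -(v ⬝ᵥ ((R + g * r * gᵀ) *ᵥ v)) := by
  have hJv := dotProduct_mulVec_self_eq_zero_of_transpose_eq_neg hJ v
  simp only [add_dotProduct, sub_mulVec, sub_dotProduct, neg_dotProduct, mulVec_neg,
    mulVec_dotProduct_eq_dotProduct_transpose_mulVec, mulVec_mulVec, add_mulVec, dotProduct_add,
    transpose_mul, transpose_transpose, Matrix.mul_assoc, hK.eq, hL.eq, hKinv, Matrix.mul_one,
    hJ, neg_mulVec, dotProduct_neg, hJv]
  have hR := dotProduct_transpose_mulVec R v v
  have hr := dotProduct_transpose_mulVec (g * (r * gᵀ)) v v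
  have hW := dotProduct_transpose_mulVec (g * (W * L)) c v
  simp only [transpose_mul, transpose_transpose, Matrix.mul_assoc, hL.eq] at hr hW
  linarith

theorem closedLoop_hasDerivAt_storage {Q R J : Matrix ι ι ℝ} {g : Matrix ι κ ℝ}
    {r W L K : Matrix κ κ ℝ} (hQ : Q.IsSymm) (hJ : Jᵀ = -J) (hL : L.IsSymm) (hK : K.IsSymm)
    (hKdet : IsUnit K.det) {x : ℝ → ι → ℝ} {xc : ℝ → κ → ℝ} {t : ℝ}
    (hx : HasDerivAt x ((J - R) *ᵥ (Q *ᵥ x t) +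
      g *ᵥ (-(r *ᵥ (gᵀ *ᵥ (Q *ᵥ x t))) - W *ᵥ (-(L *ᵥ xc t)))) t)
    (hxc : HasDerivAt xc (-((K * L) *ᵥ (Wᵀ *ᵥ (gᵀ *ᵥ (Q *ᵥ x t))))) t) :
    HasDerivAt (fun s => closedLoopStorage Q K (x s) (xc s))
      (-((Q *ᵥ x t) ⬝ᵥ ((R + g * r * gᵀ) *ᵥ (Q *ᵥ x t)))) t := by
  refine (((hasDerivAt_dotProduct_mulVec_self hQ hx).add
    (hasDerivAt_dotProduct_mulVec_self hK.inv hxc)).div_const 2).congr_deriv ?_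
  rw [← closedLoop_power_balance hJ hL hK (mul_nonsing_inv K hKdet)]
  ring

end ClosedLoop

theorem closed_loop_attractivity_general
    (nG nE nN : ℕ)
    (Rt : (BIdx nG nE nN → ℝ) → Matrix (BIdx nG nE nN) (BIdx nG nE nN) ℝ)
    (Q : Matrix (BIdx nG nE nN) (BIdx nG nE nN) ℝ) (hQpd : Q.PosDef)
    (J : Matrix (BIdx nG nE nN) (BIdx nG nE nN) ℝ) (hJ : Jᵀ = -J)
    (kd : Fin nG → ℝ) (hkd : ∀ i, 0 < kd i)
    (L : Matrix (Fin nG) (Fin nG) ℝ) (hL : L.IsSymm)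
    (r w : Matrix (Fin nG) (Fin nG) ℝ)
    (xt : ℝ → (BIdx nG nE nN → ℝ)) (xc : ℝ → (Fin nG → ℝ))
    (hxdiff : ∀ t : ℝ, 0 ≤ t → HasDerivAt xt
      ((J - Rt (xt t)) *ᵥ (Q *ᵥ xt t) +
        gMat nG nE nN *ᵥ
          (-(r *ᵥ ((gMat nG nE nN)ᵀ *ᵥ (Q *ᵥ xt t))) - w⁻¹ *ᵥ (-(L *ᵥ xc t)))) t)
    (hxcdiff : ∀ t : ℝ, 0 ≤ t → HasDerivAt xc
      (-((Matrix.diagonal kd * L) *ᵥ ((w⁻¹)ᵀ *ᵥ ((gMat nG nE nN)ᵀ *ᵥ (Q *ᵥ xt t))))) t)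
    (hbdd : ∃ M : ℝ, ∀ t ∈ Set.Ici (0 : ℝ), ∀ i j, |Rt (xt t) i j| ≤ M)
    (ε : ℝ) (hε : 0 < ε)
    (hcoer : ∀ t ∈ Set.Ici (0 : ℝ), ∀ v : BIdx nG nE nN → ℝ,
      ε * ‖v‖ ^ 2 ≤ v ⬝ᵥ ((Rt (xt t) + gMat nG nE nN * r * (gMat nG nE nN)ᵀ) *ᵥ v)) :
    Filter.Tendsto xt Filter.atTop (nhds 0) := by
  set g := gMat nG nE nN
  have hK : (diagonal kd).PosDef := posDef_diagonal_iff.2 hkd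
  set H := fun t => closedLoopStorage Q (diagonal kd) (xt t) (xc t)
  have hH := fun t ht => closedLoop_hasDerivAt_storage (isHermitian_iff_isSymm.1 hQpd.isHermitian)
    hJ hL (isSymm_diagonal kd) ((isUnit_iff_isUnit_det _).1 hK.isUnit) (hxdiff t ht) (hxcdiff t ht)
  have hHle : ∀ t, 0 ≤ t → H t ≤ H 0 := fun t ht =>
    antitoneOn_Ici_of_hasDerivAt_nonpos hH (fun s hs => neg_nonpos.2
      ((by positivity : 0 ≤ ε * _).trans (hcoer s hs _))) self_mem_Ici ht ht
  obtain ⟨M, hM⟩ := hbdd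
  -- `(R̃(x̃), x̃, x̃_c)` stays in a compact set, on which the vector field is continuous
  have hS : IsCompact ((univ.pi fun _ => univ.pi fun _ => Icc (-M) M :
      Set (Matrix (BIdx nG nE nN) (BIdx nG nE nN) ℝ)) ×ˢ
      {p : (BIdx nG nE nN → ℝ) × (Fin nG → ℝ) |
        closedLoopStorage Q (diagonal kd) p.1 p.2 ≤ H 0}) :=
    (isCompact_univ_pi fun _ => isCompact_univ_pi fun _ => isCompact_Icc).prod
      (isCompact_setOf_closedLoopStorage_le hQpd hK _)
  have hxu : UniformContinuousOn xt (Ici 0) :=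
    uniformContinuousOn_Ici_of_hasDerivAt_comp hS
      (F := fun p => (J - p.1) *ᵥ (Q *ᵥ p.2.1) +
        g *ᵥ (-(r *ᵥ (gᵀ *ᵥ (Q *ᵥ p.2.1))) - w⁻¹ *ᵥ (-(L *ᵥ p.2.2)))) (by fun_prop)
      (p := fun t => (Rt (xt t), xt t, xc t))
      (fun t ht => ⟨fun i _ j _ => abs_le.1 (hM t ht i j), hHle t ht⟩)
      hxdiff
  refine tendsto_zero_of_tendsto_mulVec_zero ((isUnit_iff_isUnit_det _).1 hQpd.isUnit) ?_
  exact tendsto_zero_of_hasDerivAt_le_neg_mul_norm_sq hε hH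
    (fun t ht => neg_le_neg (hcoer t ht _)) (fun t _ => closedLoopStorage_nonneg hQpd hK _ _)
    (Q.mulVecLin.toContinuousLinearMap.uniformContinuous.comp_uniformContinuousOn hxu)

/-- **attractivity in Proposition 2.** If along the closed loop the
dissipation quadratic form is uniformly coercive (`vᵀ(R̃(x̃(t)) + g r gᵀ)v ≥ ε‖v‖²`) and
`R̃ ∘ x̃` is continuous and bounded on `[0,∞)`, then the incremental electrical state
converges to the origin. -/
theorem closed_loop_attractivity
    (nG nE nN : ℕ) (hnG : 0 < nG) (hnE : 0 < nE) (hnN : 0 < nN)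
    (Rt : (BIdx nG nE nN → ℝ) → Matrix (BIdx nG nE nN) (BIdx nG nE nN) ℝ)
    (Q : Matrix (BIdx nG nE nN) (BIdx nG nE nN) ℝ) (hQsymm : Q.IsSymm) (hQpd : Q.PosDef)
    (J : Matrix (BIdx nG nE nN) (BIdx nG nE nN) ℝ) (hJ : Jᵀ = -J)
    (kd : Fin nG → ℝ) (hkd : ∀ i, 0 < kd i)
    (L : Matrix (Fin nG) (Fin nG) ℝ) (hL : L.IsSymm)
    (r w : Matrix (Fin nG) (Fin nG) ℝ) (hw : IsUnit w.det)
    (xt : ℝ → (BIdx nG nE nN → ℝ)) (xc : ℝ → (Fin nG → ℝ))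
    (hxdiff : ∀ t : ℝ, 0 ≤ t → HasDerivAt xt
      ((J - Rt (xt t)) *ᵥ (Q *ᵥ xt t) +
        gMat nG nE nN *ᵥ
          (-(r *ᵥ ((gMat nG nE nN)ᵀ *ᵥ (Q *ᵥ xt t))) - w⁻¹ *ᵥ (-(L *ᵥ xc t)))) t)
    (hxcdiff : ∀ t : ℝ, 0 ≤ t → HasDerivAt xc
      (-((Matrix.diagonal kd * L) *ᵥ ((w⁻¹)ᵀ *ᵥ ((gMat nG nE nN)ᵀ *ᵥ (Q *ᵥ xt t))))) t)
    (hcont : ∀ i j, ContinuousOn (fun t => Rt (xt t) i j) (Set.Ici 0))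
    (hbdd : ∃ M : ℝ, ∀ t ∈ Set.Ici (0 : ℝ), ∀ i j, |Rt (xt t) i j| ≤ M)
    (ε : ℝ) (hε : 0 < ε)
    (hcoer : ∀ t ∈ Set.Ici (0 : ℝ), ∀ v : BIdx nG nE nN → ℝ,
      ε * ‖v‖ ^ 2 ≤ v ⬝ᵥ ((Rt (xt t) + gMat nG nE nN * r * (gMat nG nE nN)ᵀ) *ᵥ v)) :
    Filter.Tendsto xt Filter.atTop (nhds 0) :=
  closed_loop_attractivity_general nG nE nN Rt Q hQpd J hJ kd hkd L hL r w xt xc hxdiff hxcdiff hbdd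
    ε hε hcoer
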